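/- Let k be a positive integer and let G be a finite simple graph on n(G) ≥ 2 vertices with maximum degree Δ(G) ≥ k and minimum degree δ(G) ≥ 1. Then F_k(G) ≤ (Δ(G) − k + 1)·n(G) / (Δ(G) − k + 1 + min{δ(G), k}). -/

import Mathlib

/-- One step of the `k`-forcing color change process: a colored vertex (in `S`)
with at most `k` non-colored neighbors causes all of its neighbors to become colored. -/
def kStep {V : Type*} [Fintype V] [DecidableEq V] (G : SimpleGraph V) [DecidableRel G.Adj]
    (k : ℕ) (S : Finset V) : Finset V :=
  S ∪ Finset.univ.filter (fun v => ∃ u ∈ S, G.Adj u v ∧ (G.neighborFinset u \ S).card ≤ k)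

/-- `S` is a `k`-forcing set if iterating the color change rule starting from `S`
eventually colors all vertices of `G`. -/
def IsKForcingSet {V : Type*} [Fintype V] [DecidableEq V] (G : SimpleGraph V)
    [DecidableRel G.Adj] (k : ℕ) (S : Finset V) : Prop :=
  ∃ n : ℕ, (kStep G k)^[n] S = Finset.univ

/-- The `k`-forcing number `F_k(G)`: the minimum cardinality of a `k`-forcing set. -/
noncomputable def kForcingNumber {V : Type*} [Fintype V] [DecidableEq V] (G : SimpleGraph V)
    [DecidableRel G.Adj] (k : ℕ) : ℕ :=
  sInf {m | ∃ S : Finset V, S.card = m ∧ IsKForcingSet G k S}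

/-! Greedy argument. If the process stalls before coloring everything, some vertex `w` whose
closed neighborhood is not fully colored has `u ≥ min(δ, k)` uncolored neighbors: either a
colored vertex with more than `k` of them, or an uncolored vertex all of whose neighbors are
uncolored. Buy `w` and all but `min(u, k)` of its uncolored neighbors; `w` then forces the rest.
Each round buys at most `Δ - k + 1` vertices and gets at least `min(δ, k)` more for free, whence
`(Δ - k + 1 + min(δ, k)) · F_k(G) ≤ (Δ - k + 1) · n(G)`. -/

open Finset

section

variable {V : Type*} [Fintype V] [DecidableEq V] (G : SimpleGraph V) [DecidableRel G.Adj]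
  (k : ℕ)

lemma subset_kStep (S : Finset V) : S ⊆ kStep G k S := subset_union_left

lemma kStep_mono : Monotone (kStep G k) := by
  intro S S' h v hv
  simp only [kStep, mem_union, mem_filter, mem_univ, true_and] at hv ⊢
  rcases hv with hv | ⟨u, hu, hadj, hcard⟩
  · exact .inl (h hv)
  · exact .inr ⟨u, h hu, hadj, (card_le_card (sdiff_subset_sdiff le_rfl h)).trans hcard⟩

lemma neighborFinset_subset_kStep {S : Finset V} {w : V} (hw : w ∈ S)
    (h : #(G.neighborFinset w \ S) ≤ k) : G.neighborFinset w ⊆ kStep G k S := fun v hv =>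
  mem_union_right _ <| mem_filter.2 ⟨mem_univ v, w, hw, (G.mem_neighborFinset w v).1 hv, h⟩

lemma IsKForcingSet.mono {S S' : Finset V} (h : S ⊆ S') (hS : IsKForcingSet G k S) :
    IsKForcingSet G k S' := by
  obtain ⟨n, hn⟩ := hS
  exact ⟨n, univ_subset_iff.1 (hn ▸ (kStep_mono G k).iterate n h)⟩

lemma IsKForcingSet.of_kStep {S : Finset V} (hS : IsKForcingSet G k (kStep G k S)) :
    IsKForcingSet G k S := by
  obtain ⟨n, hn⟩ := hS
  exact ⟨n + 1, by rwa [Function.iterate_succ_apply]⟩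

lemma exists_vertex_of_kStep_eq_self {C : Finset V} (hstuck : kStep G k C = C)
    (hC : C ≠ univ) :
    ∃ w, ¬ insert w (G.neighborFinset w) ⊆ C ∧
      min G.minDegree k ≤ #(G.neighborFinset w \ C) := by
  by_cases hA : ∃ w ∈ C, (G.neighborFinset w \ C).Nonempty
  · obtain ⟨w, hwC, v, hv⟩ := hA
    refine ⟨w, fun h => (mem_sdiff.1 hv).2 (h (mem_insert_of_mem (mem_sdiff.1 hv).1)), ?_⟩
    have hk : k < #(G.neighborFinset w \ C) := by
      by_contra! hle
      have := hstuck ▸ neighborFinset_subset_kStep G k hwC hle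
      exact (mem_sdiff.1 hv).2 (this (mem_sdiff.1 hv).1)
    exact (min_le_right _ _).trans hk.le
  · push Not at hA
    obtain ⟨v, hv⟩ : ∃ v, v ∉ C := by simpa [eq_univ_iff_forall] using hC
    have hN : G.neighborFinset v \ C = G.neighborFinset v := by
      refine sdiff_eq_self_of_disjoint (disjoint_right.2 fun x hxC hxN => ?_)
      have : v ∈ G.neighborFinset x \ C :=
        mem_sdiff.2 ⟨(G.mem_neighborFinset x v).2 ((G.mem_neighborFinset v x).1 hxN).symm, hv⟩
      simp [hA x hxC] at this
    refine ⟨v, fun h => hv (h (mem_insert_self v _)), ?_⟩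
    rw [hN, G.card_neighborFinset_eq_degree]
    exact (min_le_left _ _).trans (G.minDegree_le_degree v)

lemma exists_forcing_round (C : Finset V) (w : V) :
    ∃ P, #P ≤ G.maxDegree - k + 1 ∧ insert w (G.neighborFinset w) ⊆ kStep G k (C ∪ P) ∧
      #P + min #(G.neighborFinset w \ C) k ≤ #(kStep G k (C ∪ P) \ C) := by
  set S := G.neighborFinset w \ C
  obtain ⟨P', hP'S, hP'⟩ := exists_subset_card_eq (show #S - min #S k ≤ #S by omega)
  set P := ({w} \ C) ∪ P'
  have hwP : w ∈ C ∪ P := by by_cases hw : w ∈ C <;> simp [P, hw]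
  have hPC : Disjoint P C :=
    disjoint_union_left.2 ⟨sdiff_disjoint, disjoint_of_subset_left hP'S sdiff_disjoint⟩
  have hfree : G.neighborFinset w \ (C ∪ P) = S \ P' := by
    ext v
    have : v ∈ G.neighborFinset w → v ≠ w := fun h =>
      (G.ne_of_adj ((G.mem_neighborFinset w v).1 h)).symm
    simp only [mem_sdiff, mem_union, mem_singleton, S, P]
    tauto
  have hfree_card : #(S \ P') = min #S k := by rw [card_sdiff_of_subset hP'S]; omega
  have hN : insert w (G.neighborFinset w) ⊆ kStep G k (C ∪ P) :=
    insert_subset (subset_kStep G k _ hwP)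
      (neighborFinset_subset_kStep G k hwP (hfree ▸ hfree_card ▸ min_le_right _ _))
  have hS_deg : #S ≤ G.maxDegree := calc
    #S ≤ G.degree w := (card_le_card sdiff_subset).trans (G.card_neighborFinset_eq_degree w).le
    _ ≤ G.maxDegree := G.degree_le_maxDegree w
  refine ⟨P, ?_, hN, ?_⟩
  · calc #P ≤ #({w} \ C) + #P' := card_union_le _ _
      _ ≤ 1 + (#S - min #S k) := by
        have : #({w} \ C) ≤ 1 := (card_le_card sdiff_subset).trans (card_singleton w).le
        omega
      _ ≤ G.maxDegree - k + 1 := by omega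
  · have hsub : P ∪ (S \ P') ⊆ kStep G k (C ∪ P) \ C := by
      refine subset_sdiff.2 ⟨union_subset ?_ ?_, disjoint_union_left.2 ⟨hPC, ?_⟩⟩
      · exact subset_union_right.trans (subset_kStep G k _)
      · exact (sdiff_subset.trans sdiff_subset).trans ((subset_insert _ _).trans hN)
      · exact disjoint_of_subset_left sdiff_subset sdiff_disjoint
    have hdisj : Disjoint P (S \ P') := by
      rw [← hfree]; exact disjoint_sdiff.mono_left subset_union_right
    rw [← hfree_card, ← card_union_of_disjoint hdisj]
    exact card_le_card hsub

lemma exists_profitable_round {C : Finset V} (hC : C ≠ univ) :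
    ∃ P, C ⊂ kStep G k (C ∪ P) ∧
      (G.maxDegree - k + 1 + min G.minDegree k) * #P ≤
        (G.maxDegree - k + 1) * #(kStep G k (C ∪ P) \ C) := by
  by_cases hstuck : kStep G k C = C
  · obtain ⟨w, hwC, hm⟩ := exists_vertex_of_kStep_eq_self G k hstuck hC
    obtain ⟨P, hP, hN, hgain⟩ := exists_forcing_round G k C w
    refine ⟨P, ssubset_of_subset_not_subset (subset_union_left.trans (subset_kStep G k _))
      fun h => hwC (hN.trans h), ?_⟩
    have hm' : min G.minDegree k ≤ min #(G.neighborFinset w \ C) k :=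
      le_min hm (min_le_right _ _)
    generalize G.maxDegree - k + 1 = a at *
    nlinarith [Nat.mul_le_mul hP hm']
  · refine ⟨∅, ?_, by simp⟩
    rw [union_empty]
    exact (subset_kStep G k C).ssubset_of_ne (Ne.symm hstuck)

lemma exists_isKForcingSet_union (C : Finset V) :
    ∃ T, IsKForcingSet G k (C ∪ T) ∧
      (G.maxDegree - k + 1 + min G.minDegree k) * #T ≤ (G.maxDegree - k + 1) * #Cᶜ := by
  induction hC : #Cᶜ using Nat.strong_induction_on generalizing C with
  | _ n ih =>
  subst hC
  by_cases hCu : C = univ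
  · exact ⟨∅, ⟨0, by simp [hCu]⟩, by simp⟩
  obtain ⟨P, hlt, hcost⟩ := exists_profitable_round G k hCu
  set C' := kStep G k (C ∪ P)
  obtain ⟨T, hT, hTcost⟩ := ih #C'ᶜ (card_lt_card (compl_ssubset_compl.2 hlt)) C' rfl
  refine ⟨P ∪ T, IsKForcingSet.of_kStep G k (hT.mono G k ?_), ?_⟩
  · exact union_subset ((kStep_mono G k) (union_subset_union_right subset_union_left))
      (subset_union_right.trans (subset_union_right.trans (subset_kStep G k _)))
  · have hsplit : #Cᶜ = #(C' \ C) + #C'ᶜ := by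
      rw [card_compl, card_compl, card_sdiff_of_subset hlt.subset]
      have := card_le_univ C'
      have := card_le_card hlt.subset
      omega
    calc _ ≤ (G.maxDegree - k + 1 + min G.minDegree k) * (#P + #T) :=
          Nat.mul_le_mul_left _ (card_union_le P T)
      _ ≤ (G.maxDegree - k + 1) * #Cᶜ := by
          rw [hsplit, mul_add, mul_add]
          exact Nat.add_le_add hcost hTcost

end

theorem kForcingNumber_le_ACDP_general {V : Type*} [Fintype V] [DecidableEq V]
    (G : SimpleGraph V) [DecidableRel G.Adj] (k : ℕ)
    (hΔ : k ≤ G.maxDegree) :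
    (kForcingNumber G k : ℝ) ≤
      ((G.maxDegree : ℝ) - k + 1) * (Fintype.card V) /
        ((G.maxDegree : ℝ) - k + 1 + min (G.minDegree : ℝ) (k : ℝ)) := by
  obtain ⟨T, hT, hcost⟩ := exists_isKForcingSet_union G k ∅
  have hF : kForcingNumber G k ≤ #T := Nat.sInf_le ⟨T, rfl, by simpa using hT⟩
  rw [compl_empty, card_univ] at hcost
  have hcostR : ((G.maxDegree : ℝ) - k + 1 + min (G.minDegree : ℝ) (k : ℝ)) * #T ≤
      ((G.maxDegree : ℝ) - k + 1) * Fintype.card V := by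
    have := (Nat.cast_le (α := ℝ)).2 hcost
    push_cast [Nat.cast_sub hΔ] at this
    exact this
  have hΔR : (k : ℝ) ≤ G.maxDegree := by exact_mod_cast hΔ
  have hmin : (0 : ℝ) ≤ min (G.minDegree : ℝ) (k : ℝ) := by positivity
  rw [le_div_iff₀ (by linarith)]
  calc _ ≤ (#T : ℝ) * ((G.maxDegree : ℝ) - k + 1 + min (G.minDegree : ℝ) (k : ℝ)) := by
        gcongr
    _ ≤ _ := by linarith

/-- If `G` has `n(G) ≥ 2` vertices, `Δ(G) ≥ k` and `δ(G) ≥ 1`, then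
`F_k(G) ≤ (Δ-k+1)n / (Δ-k+1+min {δ,k})`. -/
theorem kForcingNumber_le_ACDP {V : Type*} [Fintype V] [DecidableEq V]
    (G : SimpleGraph V) [DecidableRel G.Adj] (k : ℕ) (hk : 1 ≤ k)
    (hn : 2 ≤ Fintype.card V) (hΔ : k ≤ G.maxDegree) (hδ : 1 ≤ G.minDegree) :
    (kForcingNumber G k : ℝ) ≤
      ((G.maxDegree : ℝ) - k + 1) * (Fintype.card V) /
        ((G.maxDegree : ℝ) - k + 1 + min (G.minDegree : ℝ) (k : ℝ)) :=
  kForcingNumber_le_ACDP_general G k hΔ
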